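/- arXiv:2206.06881 — 4 statements merged into one kernel-verified Lean document; each statement's English description precedes it below -/
import Mathlib

section
/- For any matroid M with circuit collection 𝒞, the collection 𝒜 (constructed as the increasing union 𝒜 = ⋃_{i≥0} 𝒜_i with 𝒜_{i+1} = ↑ε(𝒜_i)) satisfies the dependent-set axioms of a matroid on the ground set 𝒞: (D1) ∅ ∉ 𝒜; (D2) if A ∈ 𝒜 and A ⊆ A' ⊆ 𝒞 then A' ∈ 𝒜; (D3) if A₁, A₂ ∈ 𝒜 and A₁ ∩ A₂ ∉ 𝒜, then (A₁ ∪ A₂) ∖ {C} ∈ 𝒜 for every C ∈ A₁ ∩ A₂. Hence 𝒜 is the collection of dependent sets of a matroid δM with ground set 𝒞. -/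
open Set

namespace DM

variable {α : Type*}

/-- A circuit of a matroid: an inclusion-minimal dependent set. -/
def IsCircuit (M : Matroid α) (C : Set α) : Prop :=
  M.Dep C ∧ ∀ D, M.Dep D → D ⊆ C → D = C

/-- The collection 𝒞 of circuits of `M`. -/
def circuits (M : Matroid α) : Set (Set α) := {C | IsCircuit M C}

/-- The rank of a set: the maximal cardinality of an independent subset. -/
noncomputable def rk (M : Matroid α) (S : Set α) : ℕ :=
  sSup {m : ℕ | ∃ I, I ⊆ S ∧ M.Indep I ∧ I.ncard = m}

/-- The nullity function n(S) = |S| - r(S). -/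
noncomputable def nullity (M : Matroid α) (S : Set α) : ℕ := S.ncard - rk M S

/-- The support of a family of sets. -/
def supp (A : Set (Set α)) : Set α := ⋃₀ A

/-- The initial collection 𝒜₀ = {A ⊆ 𝒞 : |A| > n(supp A)}. -/
noncomputable def A0 (M : Matroid α) : Set (Set (Set α)) :=
  {A | A ⊆ circuits M ∧ nullity M (supp A) < A.ncard}

/-- The operation ε. -/
def eps (X : Set (Set (Set α))) : Set (Set (Set α)) :=
  X ∪ {B | ∃ A₁ ∈ X, ∃ A₂ ∈ X, A₁ ∩ A₂ ∉ X ∧ ∃ C ∈ A₁ ∩ A₂, B = (A₁ ∪ A₂) \ {C}}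

/-- The up-closure ↑X = {A ⊆ 𝒞 : ∃ A' ∈ X, A' ⊆ A} within the ground collection 𝒞. -/
def up (𝒞 : Set (Set α)) (X : Set (Set (Set α))) : Set (Set (Set α)) :=
  {A | A ⊆ 𝒞 ∧ ∃ A' ∈ X, A' ⊆ A}

/-- The increasing sequence 𝒜ᵢ with 𝒜₍ᵢ₊₁₎ = ↑ε(𝒜ᵢ). -/
noncomputable def Ai (M : Matroid α) : ℕ → Set (Set (Set α))
  | 0 => A0 M
  | (i+1) => up (circuits M) (eps (Ai M i))

/-- 𝒜 = ⋃ᵢ 𝒜ᵢ : the collection of dependent sets of the combinatorial derived matroid δM. -/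
noncomputable def derivedDep (M : Matroid α) : Set (Set (Set α)) := ⋃ i, Ai M i



lemma Ai_subset_circuits (M : Matroid α) (i : ℕ) : ∀ A ∈ Ai M i, A ⊆ circuits M := by
  cases i with
  | zero => exact fun A hA => hA.1
  | succ i => exact fun A hA => hA.1

lemma Ai_succ_subset (M : Matroid α) (i : ℕ) : Ai M i ⊆ Ai M (i+1) :=
  fun A hA => ⟨Ai_subset_circuits M i A hA, A, Or.inl hA, subset_rfl⟩

lemma Ai_mono (M : Matroid α) {i j : ℕ} (h : i ≤ j) : Ai M i ⊆ Ai M j := by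
  induction h with
  | refl => exact subset_rfl
  | step h ih => exact ih.trans (Ai_succ_subset M _)

lemma empty_not_mem_Ai (M : Matroid α) (i : ℕ) : (∅ : Set (Set α)) ∉ Ai M i := by
  induction i with
  | zero =>
    rintro ⟨-, h⟩
    simp at h
  | succ i ih =>
    rintro ⟨-, A', hA', hsub⟩
    rw [Set.subset_empty_iff] at hsub
    subst hsub
    rcases hA' with h | ⟨A₁, h₁, A₂, h₂, hnot, C, hC, hEq⟩
    · exact ih h
    · have hA1 : A₁ = {C} := by
        apply Set.eq_singleton_iff_unique_mem.mpr
        refine ⟨hC.1, fun x hx => ?_⟩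
        by_contra hne
        have : x ∈ (A₁ ∪ A₂) \ {C} := ⟨Or.inl hx, hne⟩
        rw [← hEq] at this
        exact this
      have hA2 : A₂ = {C} := by
        apply Set.eq_singleton_iff_unique_mem.mpr
        refine ⟨hC.2, fun x hx => ?_⟩
        by_contra hne
        have : x ∈ (A₁ ∪ A₂) \ {C} := ⟨Or.inr hx, hne⟩
        rw [← hEq] at this
        exact this
      apply hnot
      rw [hA1, hA2, Set.inter_self, ← hA1]
      exact h₁

/-- 𝒜 satisfies the dependent-set axioms (D1), (D2), (D3) of a matroid
on the ground set 𝒞. -/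
theorem derivedDep_dependent_axioms (M : Matroid α) (hE : M.E.Finite) :
    (∅ : Set (Set α)) ∉ derivedDep M ∧
    (∀ A A' : Set (Set α), A ∈ derivedDep M → A ⊆ A' → A' ⊆ circuits M →
      A' ∈ derivedDep M) ∧
    (∀ A₁ A₂ : Set (Set α), A₁ ∈ derivedDep M → A₂ ∈ derivedDep M →
      A₁ ∩ A₂ ∉ derivedDep M → ∀ C ∈ A₁ ∩ A₂, (A₁ ∪ A₂) \ {C} ∈ derivedDep M) := by
  refine ⟨?_, ?_, ?_⟩
  · rintro h
    simp only [derivedDep, Set.mem_iUnion] at h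
    obtain ⟨i, hi⟩ := h
    exact empty_not_mem_Ai M i hi
  · rintro A A' hA hsub hcirc
    simp only [derivedDep, Set.mem_iUnion] at hA ⊢
    obtain ⟨i, hi⟩ := hA
    exact ⟨i + 1, hcirc, A, Or.inl hi, hsub⟩
  · rintro A₁ A₂ h₁ h₂ hnot C hC
    simp only [derivedDep, Set.mem_iUnion] at h₁ h₂ ⊢
    obtain ⟨i, hi⟩ := h₁
    obtain ⟨j, hj⟩ := h₂
    have hi' : A₁ ∈ Ai M (max i j) := Ai_mono M (le_max_left i j) hi
    have hj' : A₂ ∈ Ai M (max i j) := Ai_mono M (le_max_right i j) hj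
    have hnot' : A₁ ∩ A₂ ∉ Ai M (max i j) := fun h =>
      hnot (Set.mem_iUnion.mpr ⟨max i j, h⟩)
    refine ⟨max i j + 1, ?_, (A₁ ∪ A₂) \ {C}, Or.inr ⟨A₁, hi', A₂, hj', hnot', C, hC, rfl⟩, subset_rfl⟩
    exact (Set.diff_subset).trans
      (Set.union_subset (Ai_subset_circuits M _ A₁ hi') (Ai_subset_circuits M _ A₂ hj'))


end DM
end

section
/- Let M be a matroid with circuit collection 𝒞 and let 𝒜_i be the collections from the construction of the combinatorial derived matroid. If A ∈ 𝒜_{i+1}, then there exists A' ∈ 𝒜_i with |A'| ≤ |A|. -/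
open Set

namespace DM

variable {α : Type*}

lemma subset_circuits_of_mem_Ai (M : Matroid α) :
    ∀ {i : ℕ} {A : Set (Set α)}, A ∈ Ai M i → A ⊆ circuits M
  | 0, _, hA => hA.1
  | _ + 1, _, hA => hA.1

lemma finite_circuits (M : Matroid α) (hE : M.E.Finite) : (circuits M).Finite :=
  hE.finite_subsets.subset fun _ hC => hC.1.2

lemma ncard_le_ncard_union_diff_singleton {β : Type*} {s t : Set β} {c : β}
    (hts : ¬ t ⊆ s) (hc : c ∈ s) (hfin : (s ∪ t).Finite) :
    s.ncard ≤ ((s ∪ t) \ {c}).ncard := by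
  have hlt : s.ncard < (s ∪ t).ncard :=
    ncard_lt_ncard (ssubset_of_subset_not_subset subset_union_left
      fun h => hts (subset_union_right.trans h)) hfin
  rw [← ncard_sdiff_singleton_add_one (mem_union_left t hc) hfin] at hlt
  omega

/-- For a new member `(A₁ ∪ A₂) \ {C}` of `ε(X)`, the condition `A₁ ∩ A₂ ∉ X` forces `A₂ ⊄ A₁`,
so adjoining `A₂` to `A₁` makes up for removing `C`. -/
lemma exists_ncard_le_of_mem_eps {X : Set (Set (Set α))} (hX : ∀ A ∈ X, A.Finite)
    {B : Set (Set α)} (hB : B ∈ eps X) : ∃ A ∈ X, A.ncard ≤ B.ncard := by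
  rcases hB with hB | ⟨A₁, h₁, A₂, h₂, hinter, C, hC, rfl⟩
  · exact ⟨B, hB, le_rfl⟩
  · have hA₂ : ¬ A₂ ⊆ A₁ := fun h => hinter (by rwa [inter_eq_self_of_subset_right h])
    exact ⟨A₁, h₁, ncard_le_ncard_union_diff_singleton hA₂ hC.1 ((hX _ h₁).union (hX _ h₂))⟩

/-- if A ∈ 𝒜_{i+1} then some A' ∈ 𝒜_i has |A'| ≤ |A|. -/
theorem exists_card_le_in_prev (M : Matroid α) (hE : M.E.Finite) (i : ℕ)
    (A : Set (Set α)) (hA : A ∈ Ai M (i + 1)) :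
    ∃ A' ∈ Ai M i, A'.ncard ≤ A.ncard := by
  obtain ⟨hAC, B, hB, hBA⟩ := hA
  have hC := finite_circuits M hE
  obtain ⟨A', hA', hle⟩ := exists_ncard_le_of_mem_eps
    (fun _ h => hC.subset (subset_circuits_of_mem_Ai M h)) hB
  exact ⟨A', hA', hle.trans (ncard_le_ncard hBA (hC.subset hAC))⟩

end DM
end

section
/- For any matroid M, the combinatorial derived matroid δM is simple: no set A ⊆ 𝒞 with |A| = 1 or |A| = 2 belongs to the collection 𝒜 of dependent sets of δM. -/
/-!
Every member of `𝒜` consists of at least three circuits. For `𝒜₀` this is a nullity count: a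
circuit has nullity at least `1`, and by circuit elimination two distinct circuits have a union
of nullity at least `2`, so neither can be outnumbered by its own circuits. The bound survives
`ε`, because `A₁ ∩ A₂ ∉ 𝒳` forces `A₁ ≠ A₂`, so `|A₁ ∪ A₂| ≥ 4` before one circuit is removed;
it survives `↑` trivially.
-/

open Set

namespace DM

variable {α : Type*}

lemma mem_circuits_iff {M : Matroid α} {C : Set α} : C ∈ circuits M ↔ M.IsCircuit C :=
  Matroid.isCircuit_iff.symm

section Nullity

variable {M : Matroid α}

lemma le_nullity_of_forall_indep {S : Set α} {k : ℕ}
    (h : ∀ I ⊆ S, M.Indep I → I.ncard + k ≤ S.ncard) : k ≤ nullity M S := by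
  have hk : k ≤ S.ncard := by simpa using h ∅ (empty_subset S) M.empty_indep
  have hrk : rk M S ≤ S.ncard - k := by
    refine csSup_le ⟨0, ∅, empty_subset S, M.empty_indep, ncard_empty α⟩ ?_
    rintro m ⟨I, hIS, hI, rfl⟩
    have := h I hIS hI
    omega
  unfold nullity
  omega

lemma one_le_nullity_of_isCircuit {C : Set α} (hC : M.IsCircuit C) (hfin : C.Finite) :
    1 ≤ nullity M C :=
  le_nullity_of_forall_indep fun _ hIC hI =>
    ncard_lt_ncard (hIC.ssubset_of_ne fun h => hC.not_indep (h ▸ hI)) hfin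

/-- Some `x ∈ C₁` lies outside `I`; eliminating `x` gives a circuit inside `(C₁ ∪ C₂) \ {x}`,
which must also leave `I` somewhere. -/
lemma nontrivial_union_sdiff_of_indep {C₁ C₂ I : Set α} (h₁ : M.IsCircuit C₁)
    (h₂ : M.IsCircuit C₂) (hne : C₁ ≠ C₂) (hI : M.Indep I) : ((C₁ ∪ C₂) \ I).Nontrivial := by
  obtain ⟨x, hx₁, hxI⟩ := not_subset.1 fun h => h₁.not_indep (hI.subset h)
  obtain ⟨C, hCsub, hC⟩ := h₁.elimination h₂ hne x
  obtain ⟨w, hwC, hwI⟩ := not_subset.1 fun h => hC.not_indep (hI.subset h)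
  exact ⟨x, ⟨Or.inl hx₁, hxI⟩, w, ⟨(hCsub hwC).1, hwI⟩, fun h => (hCsub hwC).2 h.symm⟩

lemma two_le_nullity_union_of_isCircuit {C₁ C₂ : Set α} (h₁ : M.IsCircuit C₁)
    (h₂ : M.IsCircuit C₂) (hne : C₁ ≠ C₂) (hfin : (C₁ ∪ C₂).Finite) :
    2 ≤ nullity M (C₁ ∪ C₂) := by
  refine le_nullity_of_forall_indep fun I hIS hI => ?_
  have hgap : 1 < ((C₁ ∪ C₂) \ I).ncard :=
    one_lt_ncard_iff_nontrivial_and_finite.2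
      ⟨nontrivial_union_sdiff_of_indep h₁ h₂ hne hI, hfin.sdiff⟩
  have := ncard_sdiff_add_ncard_of_subset hIS hfin
  omega

end Nullity

lemma three_le_ncard_of_mem_A0 {M : Matroid α} (hE : M.E.Finite) {A : Set (Set α)}
    (hA : A ∈ A0 M) : 3 ≤ A.ncard := by
  obtain ⟨hAC, hlt⟩ := hA
  have hfin : ∀ C ∈ A, C.Finite := fun C hC => hE.subset (mem_circuits_iff.1 (hAC hC)).subset_ground
  by_contra! hsmall
  interval_cases hcard : A.ncard
  · omega
  · obtain ⟨C, rfl⟩ := ncard_eq_one.1 hcard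
    have hC := mem_circuits_iff.1 (hAC rfl)
    have := one_le_nullity_of_isCircuit hC (hfin C rfl)
    simp only [supp, sUnion_singleton] at hlt
    omega
  · obtain ⟨C₁, C₂, hne, rfl⟩ := ncard_eq_two.1 hcard
    have h₁ := mem_circuits_iff.1 (hAC (Or.inl rfl))
    have h₂ := mem_circuits_iff.1 (hAC (Or.inr rfl))
    have := two_le_nullity_union_of_isCircuit h₁ h₂ hne
      ((hfin C₁ (Or.inl rfl)).union (hfin C₂ (Or.inr rfl)))
    simp only [supp, sUnion_pair] at hlt
    omega

section Encard

variable {β : Type*}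

lemma add_one_le_encard_union_of_ne {s t : Set β} {n : ℕ∞} (hs : n ≤ s.encard)
    (ht : n ≤ t.encard) (hne : s ≠ t) : n + 1 ≤ (s ∪ t).encard := by
  by_cases hst : s ⊆ t
  · obtain ⟨z, hzt, hzs⟩ := not_subset.1 fun hts => hne (hst.antisymm hts)
    calc n + 1 ≤ (insert z s).encard := by rw [encard_insert_of_notMem hzs]; gcongr
      _ ≤ (s ∪ t).encard := encard_le_encard (insert_subset (Or.inr hzt) subset_union_left)
  · obtain ⟨z, hzs, hzt⟩ := not_subset.1 hst
    calc n + 1 ≤ (insert z t).encard := by rw [encard_insert_of_notMem hzt]; gcongr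
      _ ≤ (s ∪ t).encard := encard_le_encard (insert_subset (Or.inl hzs) subset_union_right)

lemma le_encard_of_mem_eps {X : Set (Set (Set β))} {n : ℕ∞} (hX : ∀ A ∈ X, n ≤ A.encard)
    {B : Set (Set β)} (hB : B ∈ eps X) : n ≤ B.encard := by
  obtain hB | ⟨A₁, h₁, A₂, h₂, hint, C, hC, rfl⟩ := hB
  · exact hX B hB
  have hne : A₁ ≠ A₂ := by
    rintro rfl
    exact hint (by rwa [inter_self])
  have hunion := add_one_le_encard_union_of_ne (hX A₁ h₁) (hX A₂ h₂) hne
  rw [← encard_sdiff_singleton_add_one (mem_union_left A₂ hC.1)] at hunion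
  exact (ENat.add_le_add_iff_right ENat.one_ne_top).1 hunion

lemma le_encard_of_mem_up {𝒞 : Set (Set β)} {X : Set (Set (Set β))} {n : ℕ∞}
    (hX : ∀ A ∈ X, n ≤ A.encard) {B : Set (Set β)} (hB : B ∈ up 𝒞 X) : n ≤ B.encard :=
  let ⟨_, A, hA, hAB⟩ := hB
  (hX A hA).trans (encard_le_encard hAB)

end Encard

/-- Phrased with `encard`, which needs no finiteness through `ε` and `↑`; `ncard` would be `0`
on infinite families. -/
lemma three_le_encard_of_mem_Ai {M : Matroid α} (hE : M.E.Finite) :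
    ∀ i, ∀ A ∈ Ai M i, 3 ≤ A.encard
  | 0, A, hA => by
    have h3 := three_le_ncard_of_mem_A0 hE hA
    rw [← (finite_of_ncard_pos (by omega : 0 < A.ncard)).cast_ncard_eq]
    exact_mod_cast h3
  | i + 1, _, hA =>
    le_encard_of_mem_up (fun _ => le_encard_of_mem_eps (three_le_encard_of_mem_Ai hE i)) hA

theorem derived_simple_general (M : Matroid α) (hE : M.E.Finite)
    (A : Set (Set α))
    (hcard : A.ncard = 1 ∨ A.ncard = 2) :
    A ∉ derivedDep M := by
  intro hA
  obtain ⟨i, hi⟩ := mem_iUnion.1 hA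
  have h3 := three_le_encard_of_mem_Ai hE i A hi
  rw [← (finite_of_ncard_pos (by omega : 0 < A.ncard)).cast_ncard_eq] at h3
  have : 3 ≤ A.ncard := by exact_mod_cast h3
  omega

/-- δM is simple: no subset of 𝒞 of cardinality 1 or 2 is dependent. -/
theorem derived_simple (M : Matroid α) (hE : M.E.Finite)
    (A : Set (Set α)) (hA : A ⊆ circuits M)
    (hcard : A.ncard = 1 ∨ A.ncard = 2) :
    A ∉ derivedDep M :=
  derived_simple_general M hE A hcard

end DM
end

section
/- Let M be a matroid with circuit collection 𝒞, let S ⊆ 𝒞 with S ∉ 𝒜₀, and let C ∈ 𝒞 be a circuit with C ∖ supp(S) ≠ ∅. Then S ∪ {C} ∉ 𝒜₀. -/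
open Set

namespace DM

variable {α : Type*}

/-!
Since `S ∉ 𝒜₀` and `S ⊆ 𝒞`, we have `|S| ≤ n(supp S)`. An element `e ∈ C \ supp S` lies in the
closure of `C \ {e}`, so adjoining `C` to the support adds an element that does not raise the
rank: `n(C ∪ supp S) ≥ n(supp S) + 1`, while `|S ∪ {C}| ≤ |S| + 1`.
-/

lemma isCircuit_iff_matroid_isCircuit {M : Matroid α} {C : Set α} : IsCircuit M C ↔ M.IsCircuit C :=
  Matroid.isCircuit_iff.symm

section Rank

variable {M : Matroid α} {X Y : Set α} {e : α}

lemma rk_eq_ncard_of_isBasis' {I : Set α} (hX : X.Finite) (hI : M.IsBasis' I X) :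
    rk M X = I.ncard := by
  refine IsGreatest.csSup_eq ⟨⟨I, hI.subset, hI.indep, rfl⟩, ?_⟩
  rintro _ ⟨J, hJX, hJ, rfl⟩
  have hJI : J.encard ≤ I.encard := hI.encard_eq_eRk ▸ hJ.encard_le_eRk_of_subset hJX
  rwa [← (hX.subset hJX).cast_ncard_eq, ← (hX.subset hI.subset).cast_ncard_eq,
    Nat.cast_le] at hJI

lemma cast_rk_eq_eRk (hX : X.Finite) : (rk M X : ℕ∞) = M.eRk X := by
  obtain ⟨I, hI⟩ := M.exists_isBasis' X
  rw [rk_eq_ncard_of_isBasis' hX hI, (hX.subset hI.subset).cast_ncard_eq, hI.encard_eq_eRk]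

lemma rk_le_ncard (hX : X.Finite) : rk M X ≤ X.ncard := by
  rw [← Nat.cast_le (α := ℕ∞), cast_rk_eq_eRk hX, hX.cast_ncard_eq]
  exact M.eRk_le_encard X

lemma rk_le_rk_add_ncard_sdiff (hY : Y.Finite) (hXY : X ⊆ Y) :
    rk M Y ≤ rk M X + (Y \ X).ncard := by
  rw [← Nat.cast_le (α := ℕ∞), Nat.cast_add, cast_rk_eq_eRk hY, cast_rk_eq_eRk (hY.subset hXY),
    hY.sdiff.cast_ncard_eq]
  simpa only [union_sdiff_cancel hXY] using M.eRk_union_le_eRk_add_encard X (Y \ X)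

lemma rk_insert_eq_of_mem_closure (hX : X.Finite) (he : e ∈ M.closure X) :
    rk M (insert e X) = rk M X := by
  rw [← Nat.cast_inj (R := ℕ∞), cast_rk_eq_eRk (hX.insert e), cast_rk_eq_eRk hX,
    ← Matroid.eRk_closure_eq, Matroid.closure_insert_eq_of_mem_closure he, Matroid.eRk_closure_eq]

lemma nullity_mono (hY : Y.Finite) (hXY : X ⊆ Y) : nullity M X ≤ nullity M Y := by
  have hcard : Y.ncard = X.ncard + (Y \ X).ncard := by
    rw [← ncard_union_eq disjoint_sdiff_right (hY.subset hXY) hY.sdiff, union_sdiff_cancel hXY]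
  have hrk := rk_le_rk_add_ncard_sdiff (M := M) hY hXY
  unfold nullity
  omega

lemma nullity_insert_of_mem_closure (hX : X.Finite) (he : e ∈ M.closure X) (heX : e ∉ X) :
    nullity M (insert e X) = nullity M X + 1 := by
  have hrk := rk_le_ncard (M := M) hX
  unfold nullity
  rw [ncard_insert_of_notMem heX hX, rk_insert_eq_of_mem_closure hX he]
  omega

end Rank

lemma nullity_add_one_le_nullity_union {M : Matroid α} {C X : Set α} (hC : M.IsCircuit C)
    (hfin : (C ∪ X).Finite) (hCX : (C \ X).Nonempty) :
    nullity M X + 1 ≤ nullity M (C ∪ X) := by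
  obtain ⟨e, heC, heX⟩ := hCX
  have hsplit : C ∪ X = insert e ((C ∪ X) \ {e}) := by
    rw [insert_sdiff_singleton, insert_eq_of_mem (.inl heC)]
  have he : e ∈ M.closure ((C ∪ X) \ {e}) :=
    M.closure_subset_closure (sdiff_subset_sdiff_left subset_union_left)
      (hC.mem_closure_sdiff_singleton_of_mem heC)
  have hmono : nullity M X ≤ nullity M ((C ∪ X) \ {e}) :=
    nullity_mono hfin.sdiff (subset_sdiff_singleton subset_union_right heX)
  rw [hsplit, nullity_insert_of_mem_closure hfin.sdiff he (fun h ↦ h.2 rfl)]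
  omega

lemma supp_subset_ground {M : Matroid α} {S : Set (Set α)} (hS : S ⊆ circuits M) :
    supp S ⊆ M.E :=
  sUnion_subset fun _ hc ↦ (hS hc).1.subset_ground

lemma supp_insert (C : Set α) (S : Set (Set α)) : supp (insert C S) = C ∪ supp S :=
  sUnion_insert C S

/-- if S ∉ 𝒜₀ and C is a circuit with C ∖ supp(S) ≠ ∅, then
S ∪ {C} ∉ 𝒜₀. -/
theorem insert_notin_A0 (M : Matroid α) (hE : M.E.Finite)
    (S : Set (Set α)) (hS : S ⊆ circuits M) (hS0 : S ∉ A0 M)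
    (C : Set α) (hC : IsCircuit M C) (hCd : (C \ supp S).Nonempty) :
    insert C S ∉ A0 M := by
  rintro ⟨-, hlt⟩
  have hS_le : S.ncard ≤ nullity M (supp S) := not_lt.mp fun h ↦ hS0 ⟨hS, h⟩
  have hfin : (C ∪ supp S).Finite :=
    hE.subset (union_subset hC.1.subset_ground (supp_subset_ground hS))
  have hgrow := nullity_add_one_le_nullity_union (isCircuit_iff_matroid_isCircuit.mp hC) hfin hCd
  rw [supp_insert] at hlt
  have hcard := ncard_insert_le C S
  omega

end DM
end
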